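/- Let a 3-edge-coloring of the complete graph K_n on n vertices be given. If some color class fails to be a spanning connected subgraph (i.e., there exist two vertices not joined by any path in that color class), then one of the other two color classes contains a monochromatic double star on at least n/2 vertices. -/

import Mathlib

/-- The spanning subgraph of the complete graph on `Fin n` consisting of the
edges of color `i`, given an edge-coloring `c` with `r` colors. -/
def colorGraph {n r : ℕ} (c : Sym2 (Fin n) → Fin r) (i : Fin r) : SimpleGraph (Fin n) where
  Adj u v := u ≠ v ∧ c s(u, v) = i
  symm := ⟨fun u v h => ⟨h.1.symm, by rw [Sym2.eq_swap]; exact h.2⟩⟩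
  loopless := ⟨fun u h => h.1 rfl⟩

/-- The vertex set of the double star in color `i` centered at `u` and `v`:
`u`, `v`, and all vertices joined to `u` or to `v` by an edge of color `i`. -/
def doubleStar {n r : ℕ} (c : Sym2 (Fin n) → Fin r) (i : Fin r) (u v : Fin n) :
    Finset (Fin n) :=
  Finset.univ.filter (fun w =>
    w = u ∨ w = v ∨ (w ≠ u ∧ c s(u, w) = i) ∨ (w ≠ v ∧ c s(v, w) = i))


/-!
Let `A` be the vertex set of the colour-`i` component of `u`, so `v ∉ A`. Every edge between `A`
and its complement `B` has one of the two other colours, hence some colour `j ≠ i` is used on at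
least `#A * #B / 2` of them. In the bipartite graph `H` of these `j`-edges, with `e` edges,
Cauchy–Schwarz gives
`∑_{ab ∈ H} (deg a + deg b) = ∑ deg a ^ 2 + ∑ deg b ^ 2 ≥ e ^ 2 / #A + e ^ 2 / #B`,
so some edge `ab` has `deg a + deg b ≥ e / #A + e / #B ≥ (#B + #A) / 2 = n / 2`. The `H`-neighbours
of `a` and of `b` are disjoint and lie in the double star of colour `j` at `ab`.
-/

open Finset

namespace Finset

variable {α β : Type*} (r : α → β → Prop) [∀ a b, Decidable (r a b)] (s : Finset α) (t : Finset β)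

theorem sum_filter_product_eq_sum_sum_bipartiteAbove {M : Type*} [AddCommMonoid M]
    (f : α → β → M) :
    ∑ p ∈ s ×ˢ t with r p.1 p.2, f p.1 p.2 = ∑ a ∈ s, ∑ b ∈ t.bipartiteAbove r a, f a b := by
  simp_rw [sum_filter, sum_product, bipartiteAbove, sum_filter]

theorem card_filter_product_eq_sum_card_bipartiteAbove :
    #{p ∈ s ×ˢ t | r p.1 p.2} = ∑ a ∈ s, #(t.bipartiteAbove r a) := by
  simpa only [card_eq_sum_ones] using
    sum_filter_product_eq_sum_sum_bipartiteAbove r s t (fun _ _ => 1)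

theorem exists_rel_div_card_add_div_card_le {K : Type*} [Field K] [LinearOrder K]
    [IsStrictOrderedRing K] (hr : ({p ∈ s ×ˢ t | r p.1 p.2} : Finset (α × β)).Nonempty) :
    ∃ a ∈ s, ∃ b ∈ t, r a b ∧
      (#{p ∈ s ×ˢ t | r p.1 p.2} : K) / #s + #{p ∈ s ×ˢ t | r p.1 p.2} / #t ≤
        #(t.bipartiteAbove r a) + #(s.bipartiteBelow r b) := by
  set e : K := ((#{p ∈ s ×ˢ t | r p.1 p.2} : ℕ) : K)
  have he_above : e = ∑ a ∈ s, (#(t.bipartiteAbove r a) : K) := by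
    simp only [e, card_filter_product_eq_sum_card_bipartiteAbove, Nat.cast_sum]
  have he_below : e = ∑ b ∈ t, (#(s.bipartiteBelow r b) : K) := by
    rw [he_above, ← Nat.cast_sum, ← Nat.cast_sum,
      sum_card_bipartiteAbove_eq_sum_card_bipartiteBelow]
  have hcs_above : e ^ 2 / #s ≤ ∑ a ∈ s, (#(t.bipartiteAbove r a) : K) ^ 2 := by
    refine div_le_of_le_mul₀ (Nat.cast_nonneg _) (sum_nonneg fun _ _ => sq_nonneg _) ?_
    rw [mul_comm, he_above]
    exact sq_sum_le_card_mul_sum_sq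
  have hcs_below : e ^ 2 / #t ≤ ∑ b ∈ t, (#(s.bipartiteBelow r b) : K) ^ 2 := by
    refine div_le_of_le_mul₀ (Nat.cast_nonneg _) (sum_nonneg fun _ _ => sq_nonneg _) ?_
    rw [mul_comm, he_below]
    exact sq_sum_le_card_mul_sum_sq
  have hsum : ∑ p ∈ s ×ˢ t with r p.1 p.2, (e / #s + e / #t) ≤
      ∑ p ∈ s ×ˢ t with r p.1 p.2,
        ((#(t.bipartiteAbove r p.1) : K) + #(s.bipartiteBelow r p.2)) := by
    calc ∑ p ∈ s ×ˢ t with r p.1 p.2, (e / #s + e / #t)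
        = e ^ 2 / #s + e ^ 2 / #t := by rw [sum_const, nsmul_eq_mul]; ring
      _ ≤ ∑ a ∈ s, (#(t.bipartiteAbove r a) : K) ^ 2 +
          ∑ b ∈ t, (#(s.bipartiteBelow r b) : K) ^ 2 := add_le_add hcs_above hcs_below
      _ = _ := by
        rw [sum_filter_product_eq_sum_sum_bipartiteAbove r s t
            (fun a b => (#(t.bipartiteAbove r a) : K) + #(s.bipartiteBelow r b))]
        simp only [sum_add_distrib, sum_const, nsmul_eq_mul, ← sq]
        rw [sum_sum_bipartiteAbove_eq_sum_sum_bipartiteBelow]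
        simp only [sum_const, nsmul_eq_mul, ← sq]
  obtain ⟨⟨a, b⟩, hab, hle⟩ := exists_le_of_sum_le hr hsum
  rw [mem_filter, mem_product] at hab
  exact ⟨a, hab.1.1, b, hab.1.2, hab.2, hle⟩

theorem exists_rel_card_add_card_le_two_mul_card_bipartiteAbove_add_card_bipartiteBelow
    (hs : s.Nonempty) (ht : t.Nonempty) (h : #s * #t ≤ 2 * #{p ∈ s ×ˢ t | r p.1 p.2}) :
    ∃ a ∈ s, ∃ b ∈ t, r a b ∧
      #s + #t ≤ 2 * (#(t.bipartiteAbove r a) + #(s.bipartiteBelow r b)) := by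
  have hs' : (0 : ℚ) < #s := by exact_mod_cast hs.card_pos
  have ht' : (0 : ℚ) < #t := by exact_mod_cast ht.card_pos
  have h' : (#s * #t : ℚ) ≤ 2 * #{p ∈ s ×ˢ t | r p.1 p.2} := by exact_mod_cast h
  have hr : ({p ∈ s ×ˢ t | r p.1 p.2} : Finset (α × β)).Nonempty := by
    rw [← card_pos, ← Nat.cast_pos (α := ℚ)]
    nlinarith
  obtain ⟨a, ha, b, hb, hab, hle⟩ := exists_rel_div_card_add_div_card_le (K := ℚ) r s t hr
  refine ⟨a, ha, b, hb, hab, ?_⟩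
  have hs_half : (#t : ℚ) / 2 ≤ #{p ∈ s ×ˢ t | r p.1 p.2} / #s := by
    rw [le_div_iff₀ hs']; linarith
  have ht_half : (#s : ℚ) / 2 ≤ #{p ∈ s ×ˢ t | r p.1 p.2} / #t := by
    rw [le_div_iff₀ ht']; linarith
  exact_mod_cast (by linarith :
    (#s + #t : ℚ) ≤ 2 * (#(t.bipartiteAbove r a) + #(s.bipartiteBelow r b)))

end Finset

theorem card_bipartiteAbove_add_card_bipartiteBelow_le_card_doubleStar {n k : ℕ}
    (c : Sym2 (Fin n) → Fin k) (j : Fin k) {s t : Finset (Fin n)} (hst : Disjoint s t)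
    {a b : Fin n} (ha : a ∉ t) (hb : b ∉ s) :
    #(t.bipartiteAbove (fun x y => c s(x, y) = j) a) +
      #(s.bipartiteBelow (fun x y => c s(x, y) = j) b) ≤ #(doubleStar c j a b) := by
  set r : Fin n → Fin n → Prop := fun x y => c s(x, y) = j
  have hdisj : Disjoint (t.bipartiteAbove r a) (s.bipartiteBelow r b) :=
    hst.symm.mono (filter_subset _ _) (filter_subset _ _)
  rw [← card_union_of_disjoint hdisj]
  refine card_le_card fun w hw => ?_
  simp only [doubleStar, mem_filter, mem_univ, true_and]
  rcases mem_union.mp hw with hw | hw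
  · rw [mem_bipartiteAbove] at hw
    exact Or.inr <| Or.inr <| Or.inl ⟨ne_of_mem_of_not_mem hw.1 ha, hw.2⟩
  · rw [mem_bipartiteBelow] at hw
    exact Or.inr <| Or.inr <| Or.inr ⟨ne_of_mem_of_not_mem hw.1 hb, Sym2.eq_swap ▸ hw.2⟩

theorem color_ne_of_reachable_of_not_reachable {n k : ℕ} {c : Sym2 (Fin n) → Fin k} {i : Fin k}
    {u a b : Fin n} (ha : (colorGraph c i).Reachable u a) (hb : ¬(colorGraph c i).Reachable u b) :
    c s(a, b) ≠ i :=
  fun hc => hb (ha.trans (SimpleGraph.Adj.reachable ⟨fun h => hb (h ▸ ha), hc⟩))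

/-- If in a 3-edge-coloring of `K_n` some color class is not spanning connected,
then one of the other two color classes contains a double star on at least `n/2`
vertices. -/
theorem double_star_of_not_connected
    (n : ℕ) (c : Sym2 (Fin n) → Fin 3) (i : Fin 3)
    (h : ∃ u v : Fin n, ¬ (colorGraph c i).Reachable u v) :
    ∃ j : Fin 3, j ≠ i ∧ ∃ u v : Fin n, u ≠ v ∧ c s(u, v) = j ∧
      (n : ℚ) / 2 ≤ (doubleStar c j u v).card := by
  classical
  obtain ⟨u, v, huv⟩ := h
  let A : Finset (Fin n) := {x | (colorGraph c i).Reachable u x}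
  have hu : u ∈ A := by simp [A]
  have hv : v ∈ Aᶜ := by simpa [A] using huv
  have hcross : ∀ p ∈ A ×ˢ Aᶜ, c s(p.1, p.2) ∈ ({i}ᶜ : Finset (Fin 3)) := fun p hp => by
    simp only [A, mem_product, mem_compl, mem_filter, mem_univ, true_and] at hp
    simpa using color_ne_of_reachable_of_not_reachable hp.1 hp.2
  obtain ⟨j, hj, hjmaj⟩ := exists_le_card_fiber_of_nsmul_le_card_of_maps_to hcross
    ⟨i + 1, by simp⟩ (b := (#(A ×ˢ Aᶜ) : ℚ) / 2)
    (by rw [card_compl, card_singleton, Fintype.card_fin, two_nsmul, add_halves])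
  have hmaj : #A * #Aᶜ ≤ 2 * #{p ∈ A ×ˢ Aᶜ | c s(p.1, p.2) = j} := by
    rw [← card_product]
    exact_mod_cast (by linarith : (#(A ×ˢ Aᶜ) : ℚ) ≤ 2 * #{p ∈ A ×ˢ Aᶜ | c s(p.1, p.2) = j})
  obtain ⟨a, ha, b, hb, hab, hdeg⟩ :=
    exists_rel_card_add_card_le_two_mul_card_bipartiteAbove_add_card_bipartiteBelow
      (fun x y => c s(x, y) = j) A Aᶜ ⟨u, hu⟩ ⟨v, hv⟩ hmaj
  have hb' : b ∉ A := mem_compl.mp hb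
  have hstar := card_bipartiteAbove_add_card_bipartiteBelow_le_card_doubleStar c j
    disjoint_compl_right (notMem_compl.mpr ha) hb'
  have hn : #A + #Aᶜ = n := by rw [card_add_card_compl, Fintype.card_fin]
  refine ⟨j, by simpa using hj, a, b, ne_of_mem_of_not_mem ha hb', hab, ?_⟩
  rw [div_le_iff₀ two_pos]
  exact_mod_cast (by omega : n ≤ #(doubleStar c j a b) * 2)
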